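/- arXiv:1905.10587 — 2 statements merged into one kernel-verified Lean document; each statement's English description precedes it below -/
import Mathlib

section
/- Let K and K̃ be real symmetric positive semidefinite n×n matrices such that K - K̃ is positive semidefinite, and suppose ‖K - K̃‖ ≤ M·λ_{k+1}(K) for some constant M ≥ 0, where ‖·‖ is the spectral norm and λ_{k+1}(K) is the (k+1)-st largest eigenvalue of K. Let β > 0 and let S = (K̃ + βI)^{-1/2}(K + βI)(K̃ + βI)^{-1/2}, where (K̃ + βI)^{-1/2} is the inverse of the positive definite square root of K̃ + βI. Then I ≤ S ≤ (1 + M·λ_{k+1}(K)/β)·I in the Loewner order; in particular every eigenvalue of S lies in the interval [1, 1 + M·λ_{k+1}(K)/β], so the condition number of S is at most 1 + M·λ_{k+1}(K)/β. -/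
open scoped Matrix.Norms.L2Operator
open Matrix
open scoped ComplexOrder

/-- The positive semidefinite square root of a positive semidefinite matrix
(the definition `Matrix.PosSemidef.sqrt` of the older Mathlib, since removed). -/
noncomputable def Matrix.PosSemidef.sqrt {n 𝕜 : Type*} [Fintype n] [DecidableEq n] [RCLike 𝕜]
    {A : Matrix n n 𝕜} (hA : A.PosSemidef) : Matrix n n 𝕜 :=
  hA.1.eigenvectorUnitary.1 * diagonal ((↑) ∘ (√·) ∘ hA.1.eigenvalues) *
  (star hA.1.eigenvectorUnitary : Matrix n n 𝕜)

/-!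
Write `P = K̃ + βI` and `B = P^{1/2}`. Congruence `X ↦ B⁻¹ X B⁻¹` preserves the Loewner order and
sends `P` to `I`, so it suffices to compare `K + βI` with multiples of `P`. From below,
`K + βI - P = K - K̃ ≥ 0`. From above, with `δ = M λ_{k+1}(K) ≥ ‖K - K̃‖`,
`(1 + δ/β) P - (K + βI) = (δ I - (K - K̃)) + (δ/β) K̃ ≥ 0`. The eigenvalue bounds follow by testing
these Loewner inequalities on unit eigenvectors of `S`.
-/

namespace Matrix

variable {n 𝕜 : Type*} [Fintype n] [DecidableEq n] [RCLike 𝕜] {A : Matrix n n 𝕜}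

theorem PosSemidef.posSemidef_sqrt (hA : A.PosSemidef) : hA.sqrt.PosSemidef := by
  have hd : (diagonal ((↑) ∘ (√·) ∘ hA.1.eigenvalues) : Matrix n n 𝕜).PosSemidef :=
    PosSemidef.diagonal fun i => by simp [Real.sqrt_nonneg]
  simpa [PosSemidef.sqrt, star_eq_conjTranspose] using
    hd.mul_mul_conjTranspose_same hA.1.eigenvectorUnitary.1

theorem PosSemidef.sqrt_mul_self (hA : A.PosSemidef) : hA.sqrt * hA.sqrt = A := by
  set U : Matrix n n 𝕜 := hA.1.eigenvectorUnitary.1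
  set D : Matrix n n 𝕜 := diagonal ((↑) ∘ (√·) ∘ hA.1.eigenvalues)
  have hDD : D * D = diagonal ((↑) ∘ hA.1.eigenvalues) := by
    simp only [D, diagonal_mul_diagonal]
    congr 1
    funext i
    simp [← RCLike.ofReal_mul, Real.mul_self_sqrt (hA.eigenvalues_nonneg i)]
  calc hA.sqrt * hA.sqrt = U * (D * (star U * U) * D) * star U := by
        simp only [PosSemidef.sqrt, U, D, Matrix.mul_assoc]
    _ = A := by
        rw [Unitary.coe_star_mul_self, Matrix.mul_one, hDD]
        exact (Unitary.conjStarAlgAut_apply ..).symm.trans hA.1.spectral_theorem.symm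

theorem PosSemidef.isUnit_sqrt (hA : A.PosSemidef) (hdet : IsUnit A.det) : IsUnit hA.sqrt := by
  have h : IsUnit (hA.sqrt.det * hA.sqrt.det) := by rwa [← det_mul, hA.sqrt_mul_self]
  exact (isUnit_iff_isUnit_det _).2 (IsUnit.mul_iff.1 h).1

theorem PosSemidef.sqrt_inv_mul_self_mul_sqrt_inv (hA : A.PosSemidef) (hdet : IsUnit A.det) :
    hA.sqrt⁻¹ * A * hA.sqrt⁻¹ = 1 := by
  have hB := (isUnit_iff_isUnit_det _).1 (hA.isUnit_sqrt hdet)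
  calc hA.sqrt⁻¹ * A * hA.sqrt⁻¹ = hA.sqrt⁻¹ * (hA.sqrt * hA.sqrt) * hA.sqrt⁻¹ := by
        rw [hA.sqrt_mul_self]
    _ = 1 := by
        rw [← Matrix.mul_assoc, nonsing_inv_mul _ hB, Matrix.one_mul, mul_nonsing_inv _ hB]

theorem PosSemidef.sqrt_inv_mul_mul_sqrt_inv (hA : A.PosSemidef) {X : Matrix n n 𝕜}
    (hX : X.PosSemidef) : (hA.sqrt⁻¹ * X * hA.sqrt⁻¹).PosSemidef := by
  simpa [conjTranspose_nonsing_inv, hA.posSemidef_sqrt.1.eq] using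
    hX.mul_mul_conjTranspose_same hA.sqrt⁻¹

theorem PosSemidef.sqrt_inv_mul_mul_sqrt_inv_sub_smul_one (hA : A.PosSemidef)
    (hdet : IsUnit A.det) {X : Matrix n n 𝕜} {c : ℝ} (h : (X - c • A).PosSemidef) :
    (hA.sqrt⁻¹ * X * hA.sqrt⁻¹ - c • 1).PosSemidef := by
  have : hA.sqrt⁻¹ * X * hA.sqrt⁻¹ - c • 1 = hA.sqrt⁻¹ * (X - c • A) * hA.sqrt⁻¹ := by
    rw [Matrix.mul_sub, Matrix.sub_mul, Matrix.mul_smul, Matrix.smul_mul,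
      hA.sqrt_inv_mul_self_mul_sqrt_inv hdet]
  exact this ▸ hA.sqrt_inv_mul_mul_sqrt_inv h

theorem PosSemidef.smul_one_sub_sqrt_inv_mul_mul_sqrt_inv (hA : A.PosSemidef)
    (hdet : IsUnit A.det) {X : Matrix n n 𝕜} {c : ℝ} (h : (c • A - X).PosSemidef) :
    (c • 1 - hA.sqrt⁻¹ * X * hA.sqrt⁻¹).PosSemidef := by
  have : c • 1 - hA.sqrt⁻¹ * X * hA.sqrt⁻¹ = hA.sqrt⁻¹ * (c • A - X) * hA.sqrt⁻¹ := by
    rw [Matrix.mul_sub, Matrix.sub_mul, Matrix.mul_smul, Matrix.smul_mul,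
      hA.sqrt_inv_mul_self_mul_sqrt_inv hdet]
  exact this ▸ hA.sqrt_inv_mul_mul_sqrt_inv h

theorem IsHermitian.re_star_dotProduct_smul_one_mulVec_eigenvectorBasis (hA : A.IsHermitian)
    (c : ℝ) (i : n) :
    RCLike.re (star ⇑(hA.eigenvectorBasis i) ⬝ᵥ
      ((c • 1 : Matrix n n 𝕜) *ᵥ ⇑(hA.eigenvectorBasis i))) = c := by
  rw [smul_mulVec, one_mulVec, dotProduct_smul, RCLike.smul_re, dotProduct_comm,
    ← EuclideanSpace.inner_eq_star_dotProduct, inner_self_eq_norm_sq,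
    hA.eigenvectorBasis.orthonormal.1 i, one_pow, mul_one]

theorem IsHermitian.le_eigenvalues_of_posSemidef_sub_smul_one (hA : A.IsHermitian) {a : ℝ}
    (h : (A - a • 1).PosSemidef) (i : n) : a ≤ hA.eigenvalues i := by
  have := h.re_dotProduct_nonneg (hA.eigenvectorBasis i)
  rw [sub_mulVec, dotProduct_sub, map_sub, ← hA.eigenvalues_eq,
    hA.re_star_dotProduct_smul_one_mulVec_eigenvectorBasis] at this
  linarith

theorem IsHermitian.eigenvalues_le_of_posSemidef_smul_one_sub (hA : A.IsHermitian) {b : ℝ}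
    (h : (b • 1 - A).PosSemidef) (i : n) : hA.eigenvalues i ≤ b := by
  have := h.re_dotProduct_nonneg (hA.eigenvectorBasis i)
  rw [sub_mulVec, dotProduct_sub, map_sub, ← hA.eigenvalues_eq,
    hA.re_star_dotProduct_smul_one_mulVec_eigenvectorBasis] at this
  linarith

theorem IsHermitian.posSemidef_smul_one_sub_of_norm_le (hA : A.IsHermitian) {c : ℝ}
    (hc : ‖A‖ ≤ c) : (c • 1 - A).PosSemidef := by
  have hH : (c • 1 - A).IsHermitian := (isHermitian_one.smul (IsSelfAdjoint.all c)).sub hA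
  refine .of_dotProduct_mulVec_nonneg hH fun x => RCLike.nonneg_iff.2
    ⟨?_, hH.im_star_dotProduct_mulVec_self x⟩
  set y := (EuclideanSpace.equiv n 𝕜).symm x
  have hAy : RCLike.re (star x ⬝ᵥ (A *ᵥ x)) ≤ c * ‖y‖ ^ 2 := calc
    RCLike.re (star x ⬝ᵥ (A *ᵥ x))
        = RCLike.re (inner 𝕜 y ((EuclideanSpace.equiv n 𝕜).symm (A *ᵥ x))) := by
        rw [EuclideanSpace.inner_eq_star_dotProduct, dotProduct_comm]
        rfl
    _ ≤ ‖y‖ * (‖A‖ * ‖y‖) := (re_inner_le_norm _ _).trans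
        (mul_le_mul_of_nonneg_left (A.l2_opNorm_mulVec y) (norm_nonneg _))
    _ ≤ c * ‖y‖ ^ 2 := by nlinarith [norm_nonneg y]
  have hxx : RCLike.re (star x ⬝ᵥ x) = ‖y‖ ^ 2 := by
    rw [← inner_self_eq_norm_sq (𝕜 := 𝕜), EuclideanSpace.inner_eq_star_dotProduct,
      dotProduct_comm]
    rfl
  rw [sub_mulVec, dotProduct_sub, map_sub, smul_mulVec, one_mulVec, dotProduct_smul,
    RCLike.smul_re, hxx]
  linarith

end Matrix

theorem ciSup_div_ciInf_le_of_forall_mem_Icc {ι : Type*} [Finite ι] [Nonempty ι]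
    {f : ι → ℝ} {c : ℝ} (hf : ∀ i, f i ∈ Set.Icc 1 c) : (⨆ i, f i) / (⨅ i, f i) ≤ c := by
  obtain ⟨i⟩ := ‹Nonempty ι›
  have hsup : 1 ≤ ⨆ i, f i := (hf i).1.trans (le_ciSup (Finite.bddAbove_range f) i)
  calc (⨆ i, f i) / (⨅ i, f i) ≤ ⨆ i, f i :=
        div_le_self (by linarith) (le_ciInf fun i => (hf i).1)
    _ ≤ c := ciSup_le fun i => (hf i).2

theorem stmt0_general {n k : ℕ} (hk : k < n)
    (K Kt : Matrix (Fin n) (Fin n) ℝ)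
    (hKt : Kt.PosSemidef)
    (hdiff : (K - Kt).PosSemidef)
    (M : ℝ)
    (μ : Fin n → ℝ)
    (hnorm : ‖K - Kt‖ ≤ M * μ ⟨k, hk⟩)
    (β : ℝ) (hβ : 0 < β)
    (h₁ : (Kt + β • (1 : Matrix (Fin n) (Fin n) ℝ)).PosSemidef)
    (S : Matrix (Fin n) (Fin n) ℝ)
    (hS : S = h₁.sqrt⁻¹ * (K + β • (1 : Matrix (Fin n) (Fin n) ℝ)) * h₁.sqrt⁻¹) :
    (S - 1).PosSemidef ∧
    ((1 + M * μ ⟨k, hk⟩ / β) • (1 : Matrix (Fin n) (Fin n) ℝ) - S).PosSemidef ∧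
    ∀ (hSh : S.IsHermitian),
      (∀ i, hSh.eigenvalues i ∈ Set.Icc 1 (1 + M * μ ⟨k, hk⟩ / β)) ∧
      (⨆ i, hSh.eigenvalues i) / (⨅ i, hSh.eigenvalues i) ≤ 1 + M * μ ⟨k, hk⟩ / β := by
  set δ := M * μ ⟨k, hk⟩
  have hδ : 0 ≤ δ := (norm_nonneg _).trans hnorm
  have hdet : IsUnit (Kt + β • 1).det :=
    (isUnit_iff_isUnit_det _).1 (PosDef.posSemidef_add hKt (PosDef.one.smul hβ)).isUnit
  have hlower : (S - (1 : ℝ) • 1).PosSemidef := by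
    rw [hS]
    exact h₁.sqrt_inv_mul_mul_sqrt_inv_sub_smul_one hdet (by simpa using hdiff)
  have hupper : ((1 + δ / β) • 1 - S).PosSemidef := by
    have hsplit : (1 + δ / β) • (Kt + β • 1) - (K + β • 1)
        = (δ • 1 - (K - Kt)) + (δ / β) • Kt := by
      match_scalars <;> field_simp; ring
    rw [hS]
    refine h₁.smul_one_sub_sqrt_inv_mul_mul_sqrt_inv hdet ?_
    rw [hsplit]
    exact (hdiff.1.posSemidef_smul_one_sub_of_norm_le hnorm).add (hKt.smul (by positivity))
  refine ⟨by rwa [one_smul] at hlower, hupper, fun hSh => ?_⟩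
  have hbounds : ∀ i, hSh.eigenvalues i ∈ Set.Icc 1 (1 + δ / β) := fun i =>
    ⟨hSh.le_eigenvalues_of_posSemidef_sub_smul_one hlower i,
      hSh.eigenvalues_le_of_posSemidef_smul_one_sub hupper i⟩
  have : Nonempty (Fin n) := ⟨⟨k, hk⟩⟩
  exact ⟨hbounds, ciSup_div_ciInf_le_of_forall_mem_Icc hbounds⟩

/-- If `K, K̃` are real symmetric PSD `n × n` matrices with `K - K̃` PSD and
`‖K - K̃‖ ≤ M · λ_{k+1}(K)` (spectral norm, eigenvalues in descending order `μ`), `β > 0`, and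
`S = (K̃ + βI)^{-1/2} (K + βI) (K̃ + βI)^{-1/2}`, then `I ≤ S ≤ (1 + M λ_{k+1}(K)/β) I` in the
Loewner order; in particular every eigenvalue of `S` lies in `[1, 1 + M λ_{k+1}(K)/β]` and the
condition number of `S` is at most `1 + M λ_{k+1}(K)/β`. -/
theorem stmt0 {n k : ℕ} (hk : k < n)
    (K Kt : Matrix (Fin n) (Fin n) ℝ)
    (hK : K.PosSemidef) (hKt : Kt.PosSemidef)
    (hdiff : (K - Kt).PosSemidef)
    (M : ℝ) (hM : 0 ≤ M)
    (μ : Fin n → ℝ) (hμanti : Antitone μ)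
    (hμ : ∃ e : Equiv.Perm (Fin n), ∀ i, μ i = hK.isHermitian.eigenvalues (e i))
    (hnorm : ‖K - Kt‖ ≤ M * μ ⟨k, hk⟩)
    (β : ℝ) (hβ : 0 < β)
    (h₁ : (Kt + β • (1 : Matrix (Fin n) (Fin n) ℝ)).PosSemidef)
    (S : Matrix (Fin n) (Fin n) ℝ)
    (hS : S = h₁.sqrt⁻¹ * (K + β • (1 : Matrix (Fin n) (Fin n) ℝ)) * h₁.sqrt⁻¹) :
    (S - 1).PosSemidef ∧
    ((1 + M * μ ⟨k, hk⟩ / β) • (1 : Matrix (Fin n) (Fin n) ℝ) - S).PosSemidef ∧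
    ∀ (hSh : S.IsHermitian),
      (∀ i, hSh.eigenvalues i ∈ Set.Icc 1 (1 + M * μ ⟨k, hk⟩ / β)) ∧
      (⨆ i, hSh.eigenvalues i) / (⨅ i, hSh.eigenvalues i) ≤ 1 + M * μ ⟨k, hk⟩ / β :=
  stmt0_general hk K Kt hKt hdiff M μ hnorm β hβ h₁ S hS
end

section
/- Let A ∈ ℝ^{m×n}, let C ∈ ℝ^{m×k}, V ∈ ℝ^{n×k}, W ∈ ℝ^{m×k}, and R ∈ ℝ^{k×n}, and suppose A = C·Vᵀ + E and A = W·R + Ẽ for error matrices E, Ẽ. Suppose R has full row rank k, so that R·Rᵀ is invertible, and let R† = Rᵀ·(R·Rᵀ)^{-1} denote its Moore–Penrose pseudoinverse. Define U = Vᵀ·R† ∈ ℝ^{k×k}. Then ‖A - C·U·R‖ ≤ ‖E‖ + ‖Ẽ‖, where ‖·‖ is the spectral norm. -/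
/-!
With `P = R†R` the orthogonal projection onto the row space of `R`, we have `CUR = CVᵀP = (A - E)P`,
and `WRP = WR` since `RP = R`. Hence `A - CUR = Ẽ(I - P) + EP`, and both `P` and `I - P` have
spectral norm at most one.
-/

open scoped Matrix.Norms.L2Operator
open Matrix

namespace Matrix

variable {m n K : Type*} [Fintype m] [DecidableEq m] [Fintype n]

theorem isUnit_of_rank_eq_card [Field K] {A : Matrix m m K} (h : A.rank = Fintype.card m) :
    IsUnit A := by
  rw [← mulVec_surjective_iff_isUnit, ← coe_mulVecLin, ← LinearMap.range_eq_top]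
  apply Submodule.eq_top_of_finrank_eq
  rw [← rank, h, Module.finrank_fintype_fun_eq_card]

theorem isUnit_mul_transpose_of_rank_eq_card [Field K] [LinearOrder K] [IsStrictOrderedRing K]
    {R : Matrix m n K} (h : R.rank = Fintype.card m) : IsUnit (R * Rᵀ) :=
  isUnit_of_rank_eq_card (by rw [rank_self_mul_transpose, h])

variable [CommRing K] [StarRing K]

theorem mul_mul_conjTranspose_inv_mul {R : Matrix m n K} (h : IsUnit (R * Rᴴ)) :
    R * (Rᴴ * (R * Rᴴ)⁻¹ * R) = R := by
  rw [← Matrix.mul_assoc, ← Matrix.mul_assoc,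
    mul_nonsing_inv _ ((isUnit_iff_isUnit_det _).mp h), Matrix.one_mul]

theorem isStarProjection_conjTranspose_mul_inv_mul {R : Matrix m n K} (h : IsUnit (R * Rᴴ)) :
    IsStarProjection (Rᴴ * (R * Rᴴ)⁻¹ * R) where
  isIdempotentElem := by
    rw [IsIdempotentElem, Matrix.mul_assoc, mul_mul_conjTranspose_inv_mul h]
  isSelfAdjoint := by
    rw [IsSelfAdjoint, star_eq_conjTranspose, conjTranspose_mul, conjTranspose_mul,
      conjTranspose_nonsing_inv, conjTranspose_mul, conjTranspose_conjTranspose, Matrix.mul_assoc]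

end Matrix

theorem Matrix.l2_opNorm_mul_one_sub_add_mul_le {m n 𝕜 : Type*} [RCLike 𝕜]
    [Fintype m] [Fintype n] [DecidableEq n] {P : Matrix n n 𝕜} (hP : IsStarProjection P)
    (X Y : Matrix m n 𝕜) : ‖X * (1 - P) + Y * P‖ ≤ ‖X‖ + ‖Y‖ :=
  calc ‖X * (1 - P) + Y * P‖ ≤ ‖X‖ * ‖1 - P‖ + ‖Y‖ * ‖P‖ :=
        (norm_add_le _ _).trans (add_le_add (l2_opNorm_mul _ _) (l2_opNorm_mul _ _))
    _ ≤ ‖X‖ * 1 + ‖Y‖ * 1 := by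
        gcongr
        exacts [hP.one_sub.norm_le, hP.norm_le]
    _ = ‖X‖ + ‖Y‖ := by rw [mul_one, mul_one]

/-- Let `A = C Vᵀ + E = W R + Ẽ`, where `R ∈ ℝ^{k×n}` has full row rank `k`
(so `R Rᵀ` is invertible), and let `U = Vᵀ R†` with `R† = Rᵀ (R Rᵀ)⁻¹`. Then
`‖A - C U R‖ ≤ ‖E‖ + ‖Ẽ‖` in the spectral norm. -/
theorem stmt6 {m n k : ℕ}
    (A : Matrix (Fin m) (Fin n) ℝ) (C : Matrix (Fin m) (Fin k) ℝ)
    (V : Matrix (Fin n) (Fin k) ℝ) (W : Matrix (Fin m) (Fin k) ℝ)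
    (R : Matrix (Fin k) (Fin n) ℝ)
    (E Et : Matrix (Fin m) (Fin n) ℝ)
    (hE : A = C * Vᵀ + E) (hEt : A = W * R + Et)
    (hR : R.rank = k) :
    ‖A - C * (Vᵀ * (Rᵀ * (R * Rᵀ)⁻¹)) * R‖ ≤ ‖E‖ + ‖Et‖ := by
  have hRt : Rᴴ = Rᵀ := conjTranspose_eq_transpose_of_trivial R
  have hRRt : IsUnit (R * Rᴴ) :=
    hRt ▸ isUnit_mul_transpose_of_rank_eq_card (by rwa [Fintype.card_fin])
  have hP : IsStarProjection (Rᵀ * (R * Rᵀ)⁻¹ * R) :=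
    hRt ▸ isStarProjection_conjTranspose_mul_inv_mul hRRt
  have hRP : R * (Rᵀ * (R * Rᵀ)⁻¹ * R) = R := hRt ▸ mul_mul_conjTranspose_inv_mul hRRt
  set P := Rᵀ * (R * Rᵀ)⁻¹ * R
  have hsplit : A - C * (Vᵀ * (Rᵀ * (R * Rᵀ)⁻¹)) * R = Et * (1 - P) + E * P := by
    calc A - C * (Vᵀ * (Rᵀ * (R * Rᵀ)⁻¹)) * R = A - (A - E) * P := by
          simp only [hE, add_sub_cancel_right, P, Matrix.mul_assoc]
      _ = (W * R + Et) * (1 - P) + E * P := by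
          rw [← hEt]; simp only [Matrix.sub_mul, Matrix.mul_sub, Matrix.mul_one]; abel
      _ = Et * (1 - P) + E * P := by
          rw [Matrix.add_mul, Matrix.mul_assoc, Matrix.mul_sub, Matrix.mul_one, hRP, sub_self,
            Matrix.mul_zero, zero_add]
  rw [hsplit, add_comm ‖E‖]
  exact l2_opNorm_mul_one_sub_add_mul_le hP Et E
end
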